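/- For any n ≥ 2 with canonical parameters a, b, c (b, c not both zero), 12n - 3 is not a perfect square, and (6(a-1) + b + 3)² < 12n - 3 ≤ (6(a-1) + b + 4)², hence ⌈√(12n-3)⌉ = 6(a-1) + b + 4. -/

import Mathlib

/-!
Write `m = 6(a-1) + b + 3`. Since `6 * (a choose 2) = 3a(a-1)`, completing the square gives
`12n - 3 = m² + 12c + b(6-b)` and `(m+1)² = 12n - 3 + 12(a-c) + (b+1)(b-5)`. For `0 ≤ b ≤ 5`,
`0 ≤ c < a` and `(b,c) ≠ (0,0)` the first gap is positive and the second is at least `12 - 9`,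
so `12n - 3` lies strictly between two consecutive squares.
-/

theorem Int.not_exists_sq_of_sq_lt_of_lt_sq {m x : ℤ} (hl : m ^ 2 < x) (hr : x < (m + 1) ^ 2) :
    ¬∃ s : ℤ, s ^ 2 = x := by
  rintro ⟨s, rfl⟩
  have hms : |m| < |s| := sq_lt_sq.mp hl
  have hsm : |s| < |m + 1| := sq_lt_sq.mp hr
  have : |m + 1| ≤ |m| + 1 := (abs_add_le m 1).trans_eq (by rw [abs_one])
  omega

theorem Real.ceil_sqrt_eq_of_sq_lt_of_le {m : ℤ} {x : ℝ} (hl : (m : ℝ) ^ 2 < x)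
    (hr : x ≤ ((m : ℝ) + 1) ^ 2) : ⌈√x⌉ = m + 1 := by
  have hm : (0 : ℝ) ≤ m := by
    have : (-1 : ℝ) < 2 * m := by nlinarith
    have : (-1 : ℤ) < 2 * m := by exact_mod_cast this
    exact_mod_cast (show 0 ≤ m by omega)
  rw [Int.ceil_eq_iff]
  push_cast
  exact ⟨by linarith [Real.lt_sqrt_of_sq_lt hl], (Real.sqrt_le_left (by linarith)).mpr hr⟩

section CanonicalParameters

variable (a b c : ℤ)

theorem two_mul_mul_pred_ediv_two : 2 * (a * (a - 1) / 2) = a * (a - 1) :=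
  Int.two_mul_ediv_two_of_even (Int.even_mul_pred_self a)

theorem twelve_mul_canonical_sub_three :
    12 * (1 + 6 * (a * (a - 1) / 2) + a * b + c) - 3
      = (6 * (a - 1) + b + 3) ^ 2 + (12 * c + b * (6 - b)) := by
  linear_combination 36 * two_mul_mul_pred_ediv_two a

theorem sq_eq_twelve_mul_canonical_sub_three_add :
    (6 * (a - 1) + b + 4) ^ 2
      = 12 * (1 + 6 * (a * (a - 1) / 2) + a * b + c) - 3 + (12 * (a - c) + (b + 1) * (b - 5)) := by
  linear_combination -36 * two_mul_mul_pred_ediv_two a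

end CanonicalParameters

theorem stmt_19_general (n : ℕ) (a b c : ℤ) (hb0 : 0 ≤ b)
    (hb5 : b ≤ 5) (hc0 : 0 ≤ c) (hca : c < a) (hbc : ¬ (b = 0 ∧ c = 0))
    (hn : (n : ℤ) = 1 + 6 * (a * (a - 1) / 2) + a * b + c) :
    (¬ ∃ s : ℤ, s ^ 2 = 12 * (n : ℤ) - 3) ∧
    (6 * (a - 1) + b + 3) ^ 2 < 12 * (n : ℤ) - 3 ∧
    12 * (n : ℤ) - 3 ≤ (6 * (a - 1) + b + 4) ^ 2 ∧
    ⌈Real.sqrt (12 * (n : ℝ) - 3)⌉ = 6 * (a - 1) + b + 4 := by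
  have hlow : (6 * (a - 1) + b + 3) ^ 2 < 12 * (n : ℤ) - 3 := by
    have : 0 < 12 * c + b * (6 - b) := by
      rcases hb0.eq_or_lt with rfl | hb
      · omega
      · nlinarith
    rw [hn, twelve_mul_canonical_sub_three]
    omega
  have hhigh : 12 * (n : ℤ) - 3 < (6 * (a - 1) + b + 4) ^ 2 := by
    have : 0 < 12 * (a - c) + (b + 1) * (b - 5) := by nlinarith [sq_nonneg (b - 2)]
    rw [hn, sq_eq_twelve_mul_canonical_sub_three_add _ _ c]
    omega
  have hsucc : 6 * (a - 1) + b + 4 = (6 * (a - 1) + b + 3) + 1 := by ring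
  rw [hsucc] at hhigh ⊢
  refine ⟨Int.not_exists_sq_of_sq_lt_of_lt_sq hlow hhigh, hlow, hhigh.le, ?_⟩
  have hcast : 12 * (n : ℝ) - 3 = ((12 * (n : ℤ) - 3 : ℤ) : ℝ) := by push_cast; ring
  rw [hcast]
  exact Real.ceil_sqrt_eq_of_sq_lt_of_le (by exact_mod_cast hlow) (by exact_mod_cast hhigh.le)

/-- For `n` with canonical parameters and `(b,c) ≠ (0,0)`, `12n-3` is not a perfect
square, `(6(a-1)+b+3)² < 12n-3 ≤ (6(a-1)+b+4)²`, hence `⌈√(12n-3)⌉ = 6(a-1)+b+4`. -/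
theorem stmt_19 (n : ℕ) (hn2 : 2 ≤ n) (a b c : ℤ) (ha : 1 ≤ a) (hb0 : 0 ≤ b)
    (hb5 : b ≤ 5) (hc0 : 0 ≤ c) (hca : c < a) (hbc : ¬ (b = 0 ∧ c = 0))
    (hn : (n : ℤ) = 1 + 6 * (a * (a - 1) / 2) + a * b + c) :
    (¬ ∃ s : ℤ, s ^ 2 = 12 * (n : ℤ) - 3) ∧
    (6 * (a - 1) + b + 3) ^ 2 < 12 * (n : ℤ) - 3 ∧
    12 * (n : ℤ) - 3 ≤ (6 * (a - 1) + b + 4) ^ 2 ∧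
    ⌈Real.sqrt (12 * (n : ℝ) - 3)⌉ = 6 * (a - 1) + b + 4 :=
  stmt_19_general n a b c hb0 hb5 hc0 hca hbc hn
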